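/- arXiv:2310.16920 — 6 statements merged into one kernel-verified Lean document; each statement's English description precedes it below -/
import Mathlib

section
/- Let p̃(u) = 1/((u² + 2) ln²(u² + 2)). For every real x > 0 satisfying ln(x² + 2) > 8/3, the tail integral satisfies ∫_x^∞ p̃(u) du > (1/4) · (x² + 2)^{-5/2}. -/
/-!
Since `log t ≤ 4 t^{1/4}`, we have `log² t ≤ 16 √t`, so `p̃(u) ≥ (u² + 2)^{-3/2} / 16`.
On `(x, 2x]` this gives `p̃ ≥ (x² + 2)^{-3/2} / 128`, hence a tail of at least
`x (x² + 2)^{-3/2} / 128`. This exceeds `(x² + 2)^{-5/2} / 4` as soon as `x (x² + 2) > 32`,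
which holds because `x² + 2 > e^{8/3} > 11` forces `x > 3`.
-/

open MeasureTheory Real Set

noncomputable def ptilde (u : ℝ) : ℝ := 1 / ((u ^ 2 + 2) * log (u ^ 2 + 2) ^ 2)

lemma ptilde_nonneg (u : ℝ) : 0 ≤ ptilde u := by
  unfold ptilde; positivity

lemma measurable_ptilde : Measurable ptilde := by
  unfold ptilde; fun_prop

lemma ptilde_le_mul_inv_one_add_sq (u : ℝ) : ptilde u ≤ (log 2 ^ 2)⁻¹ * (1 + u ^ 2)⁻¹ := by
  have hlog : log 2 ≤ log (u ^ 2 + 2) :=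
    log_le_log (by norm_num) (le_add_of_nonneg_left (sq_nonneg u))
  have hlog2 : 0 < log 2 := log_pos (by norm_num)
  rw [ptilde, one_div, ← mul_inv]
  apply inv_anti₀ (by positivity)
  rw [mul_comm]
  exact mul_le_mul (by linarith) (by gcongr) (by positivity) (by positivity)

lemma integrable_ptilde : Integrable ptilde :=
  (integrable_inv_one_add_sq.const_mul _).mono' measurable_ptilde.aestronglyMeasurable
    (ae_of_all _ fun u => by
      rw [norm_of_nonneg (ptilde_nonneg u)]; exact ptilde_le_mul_inv_one_add_sq u)

lemma sq_log_le_sixteen_mul_rpow {t : ℝ} (ht : 1 ≤ t) : log t ^ 2 ≤ 16 * t ^ (1 / 2 : ℝ) := by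
  have hlog : log t ≤ t ^ (1 / 4 : ℝ) / (1 / 4) := log_le_rpow_div (by linarith) (by norm_num)
  calc log t ^ 2 ≤ (t ^ (1 / 4 : ℝ) / (1 / 4)) ^ 2 := by gcongr; exact log_nonneg ht
    _ = 16 * t ^ (1 / 2 : ℝ) := by
      rw [div_pow, ← rpow_natCast, ← rpow_mul (by linarith)]; norm_num; ring

lemma rpow_neg_three_halves_div_sixteen_le {t : ℝ} (ht : 1 < t) :
    t ^ (-3 / 2 : ℝ) / 16 ≤ 1 / (t * log t ^ 2) := by
  have ht0 : 0 < t := by linarith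
  have hlog : 0 < log t := log_pos ht
  calc t ^ (-3 / 2 : ℝ) / 16 = 1 / (t * (16 * t ^ (1 / 2 : ℝ))) := by
        rw [show (-3 / 2 : ℝ) = -(1 + 1 / 2) by norm_num, rpow_neg ht0.le, rpow_add ht0,
          rpow_one]
        field_simp
    _ ≤ 1 / (t * log t ^ 2) := by
        gcongr; exact sq_log_le_sixteen_mul_rpow ht.le

lemma rpow_neg_three_halves_div_le_ptilde_of_mem_Ioc {x u : ℝ} (hx : 0 < x)
    (hu : u ∈ Ioc x (2 * x)) :
    (x ^ 2 + 2) ^ (-3 / 2 : ℝ) / 128 ≤ ptilde u := by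
  obtain ⟨hxu, hu2x⟩ := hu
  have hle : u ^ 2 + 2 ≤ 2 ^ 2 * (x ^ 2 + 2) := by nlinarith
  calc (x ^ 2 + 2) ^ (-3 / 2 : ℝ) / 128
      = (2 ^ 2 * (x ^ 2 + 2)) ^ (-3 / 2 : ℝ) / 16 := by
        rw [mul_rpow (by norm_num) (by positivity), ← rpow_natCast (2 : ℝ) 2,
          ← rpow_mul (by norm_num)]
        norm_num; ring
    _ ≤ (u ^ 2 + 2) ^ (-3 / 2 : ℝ) / 16 := by
        gcongr ?_ / _
        exact rpow_le_rpow_of_nonpos (by positivity) hle (by norm_num)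
    _ ≤ ptilde u := rpow_neg_three_halves_div_sixteen_le (by nlinarith)

lemma eleven_lt_exp_eight_thirds : (11 : ℝ) < exp (8 / 3) := by
  -- the degree-4 Taylor polynomial of `exp` at `8 / 3` is already about `12.5`
  have h := sum_le_exp_of_nonneg (by norm_num : (0 : ℝ) ≤ 8 / 3) 5
  norm_num [Finset.sum_range_succ, Nat.factorial] at h
  linarith

lemma quarter_mul_rpow_neg_five_halves_lt {x s : ℝ} (hs : 0 < s) (hxs : 32 < x * s) :
    (1 / 4) * s ^ (-(5 : ℝ) / 2) < x * (s ^ (-3 / 2 : ℝ) / 128) := by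
  rw [show -(5 : ℝ) / 2 = -3 / 2 + -1 by norm_num, rpow_add hs, rpow_neg_one]
  have ha : 0 < s ^ (-3 / 2 : ℝ) := rpow_pos_of_pos hs _
  have hinv : s⁻¹ < x / 32 := by rw [inv_lt_iff_one_lt_mul₀ hs]; linarith
  nlinarith

/-- For every `x > 0` with `ln(x² + 2) > 8/3`, the tail integral of
`p̃(u) = 1/((u² + 2) ln²(u² + 2))` satisfies
`∫_x^∞ p̃(u) du > (1/4) (x² + 2)^{-5/2}`. -/
theorem ptilde_tail_lower_bound (x : ℝ) (hx : 0 < x)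
    (hlog : Real.log (x ^ 2 + 2) > 8 / 3) :
    (∫ u in Set.Ioi x, 1 / ((u ^ 2 + 2) * (Real.log (u ^ 2 + 2)) ^ 2)) >
      (1 / 4) * (x ^ 2 + 2) ^ (-(5 : ℝ) / 2) := by
  have hs : 11 < x ^ 2 + 2 :=
    eleven_lt_exp_eight_thirds.trans ((lt_log_iff_exp_lt (by positivity)).1 hlog)
  have hx3 : 3 < x := by nlinarith
  have hvol : volume.real (Ioc x (2 * x)) = x := by
    rw [Real.volume_real_Ioc, max_eq_left (by linarith)]; ring
  calc (1 / 4) * (x ^ 2 + 2) ^ (-(5 : ℝ) / 2)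
      < x * ((x ^ 2 + 2) ^ (-3 / 2 : ℝ) / 128) :=
        quarter_mul_rpow_neg_five_halves_lt (by positivity) (by nlinarith)
    _ ≤ ∫ u in Ioc x (2 * x), ptilde u := by
        convert setIntegral_ge_of_const_le_real measurableSet_Ioc measure_Ioc_lt_top.ne
          (fun u hu => rpow_neg_three_halves_div_le_ptilde_of_mem_Ioc hx hu)
          integrable_ptilde.integrableOn using 1
        rw [hvol, mul_comm]
    _ ≤ ∫ u in Ioi x, ptilde u :=
        setIntegral_mono_set integrable_ptilde.integrableOn (ae_of_all _ ptilde_nonneg)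
          (ae_of_all _ Ioc_subset_Ioi_self)
end

section
/- Let c_φ > 0 and 0 ≤ c_β < 1 be constants, and for each integer t ≥ 0 set φ_t = c_φ/√(t+1) and β_t = c_β/√(t+1). Let (a_t)_{t≥0} be a sequence of nonnegative real numbers with a_0 = 0 satisfying, for all t ≥ 0, a_{t+1} ≤ β_t · a_t + (1 − β_t) · φ_t. Then for all t ≥ 0: a_{t+1} ≤ 2 c_φ/√(t+1), and moreover a_t ≤ c_φ for all t ≥ 0. -/
open Real

lemma one_le_sqrt_natCast_add_one (t : ℕ) : 1 ≤ √((t : ℝ) + 1) :=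
  Real.one_le_sqrt.mpr (by linarith [t.cast_nonneg (α := ℝ)])

theorem le_of_le_convex_comb_step {a β φ : ℕ → ℝ} {C : ℝ} (h0 : a 0 ≤ C)
    (hβ0 : ∀ t, 0 ≤ β t) (hβ1 : ∀ t, β t ≤ 1) (hφ : ∀ t, φ t ≤ C)
    (hrec : ∀ t, a (t + 1) ≤ β t * a t + (1 - β t) * φ t) : ∀ t, a t ≤ C
  | 0 => h0
  | t + 1 =>
    calc a (t + 1) ≤ β t * a t + (1 - β t) * φ t := hrec t
      _ ≤ β t * C + (1 - β t) * C :=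
        add_le_add (mul_le_mul_of_nonneg_left (le_of_le_convex_comb_step h0 hβ0 hβ1 hφ hrec t)
          (hβ0 t)) (mul_le_mul_of_nonneg_left (hφ t) (sub_nonneg.2 (hβ1 t)))
      _ = C := by ring

theorem gradient_estimator_bound_general
    (cphi cbeta : ℝ) (hcphi : 0 < cphi) (hcbeta0 : 0 ≤ cbeta) (hcbeta1 : cbeta < 1)
    (φ β : ℕ → ℝ)
    (hφ : ∀ t : ℕ, φ t = cphi / Real.sqrt ((t : ℝ) + 1))
    (hβ : ∀ t : ℕ, β t = cbeta / Real.sqrt ((t : ℝ) + 1))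
    (a : ℕ → ℝ) (ha0 : a 0 = 0)
    (hrec : ∀ t : ℕ, a (t + 1) ≤ β t * a t + (1 - β t) * φ t) :
    (∀ t : ℕ, a (t + 1) ≤ 2 * cphi / Real.sqrt ((t : ℝ) + 1)) ∧
      (∀ t : ℕ, a t ≤ cphi) := by
  have hβ0 (t : ℕ) : 0 ≤ β t := by rw [hβ]; positivity
  have hβ1 (t : ℕ) : β t ≤ 1 := by
    rw [hβ]; exact (div_le_self hcbeta0 (one_le_sqrt_natCast_add_one t)).trans hcbeta1.le
  have hφ0 (t : ℕ) : 0 ≤ φ t := by rw [hφ]; positivity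
  have hφ_le (t : ℕ) : φ t ≤ cphi := by
    rw [hφ]; exact div_le_self hcphi.le (one_le_sqrt_natCast_add_one t)
  have hbound : ∀ t, a t ≤ cphi :=
    le_of_le_convex_comb_step (ha0.trans_le hcphi.le) hβ0 hβ1 hφ_le hrec
  refine ⟨fun t => ?_, hbound⟩
  calc a (t + 1) ≤ β t * a t + (1 - β t) * φ t := hrec t
    _ ≤ β t * cphi + φ t :=
      add_le_add (mul_le_mul_of_nonneg_left (hbound t) (hβ0 t))
        (mul_le_of_le_one_left (hφ0 t) (by linarith [hβ0 t]))
    _ = (cbeta + 1) * cphi / √((t : ℝ) + 1) := by rw [hβ, hφ]; ring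
    _ ≤ 2 * cphi / √((t : ℝ) + 1) := by gcongr; linarith

/-- The deterministic scalar recursion governing the local gradient estimator magnitudes:
if `a 0 = 0`, `a` is nonnegative, and `a (t+1) ≤ β t * a t + (1 − β t) * φ t` with
`φ t = c_φ/√(t+1)` and `β t = c_β/√(t+1)`, `c_φ > 0`, `0 ≤ c_β < 1`, then
`a (t+1) ≤ 2 c_φ/√(t+1)` and `a t ≤ c_φ` for all `t`. -/
theorem gradient_estimator_bound
    (cphi cbeta : ℝ) (hcphi : 0 < cphi) (hcbeta0 : 0 ≤ cbeta) (hcbeta1 : cbeta < 1)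
    (φ β : ℕ → ℝ)
    (hφ : ∀ t : ℕ, φ t = cphi / Real.sqrt ((t : ℝ) + 1))
    (hβ : ∀ t : ℕ, β t = cbeta / Real.sqrt ((t : ℝ) + 1))
    (a : ℕ → ℝ) (ha0 : a 0 = 0) (hanneg : ∀ t : ℕ, 0 ≤ a t)
    (hrec : ∀ t : ℕ, a (t + 1) ≤ β t * a t + (1 - β t) * φ t) :
    (∀ t : ℕ, a (t + 1) ≤ 2 * cphi / Real.sqrt ((t : ℝ) + 1)) ∧
      (∀ t : ℕ, a t ≤ cphi) :=
  gradient_estimator_bound_general cphi cbeta hcphi hcbeta0 hcbeta1 φ β hφ hβ a ha0 hrec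
end

section
/- Let p: ℝ → ℝ be a nonnegative measurable function that is symmetric about zero (p(u) = p(−u) for all u) and satisfies ∫_{-∞}^{∞} |u| p(u) du ≤ σ for some σ > 0. Then for every ζ ∈ ℝ and every ε > 0, the integral ∫_{-∞}^{∞} u · p(u)/√((ζ + u)² + ε) du is well defined (the integrand is integrable) and satisfies |∫_{-∞}^{∞} u · p(u)/√((ζ + u)² + ε) du| ≤ 2 σ |ζ| / ε. -/
set_option maxHeartbeats 1000000


open MeasureTheory

/-- If `p` is nonnegative, measurable, symmetric about zero and has first absolute moment
bounded by `σ`, then for every `ζ` and `ε > 0` the integral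
`∫ u p(u)/√((ζ+u)² + ε) du` is well defined and bounded in absolute value by `2σ|ζ|/ε`. -/
theorem symmetric_noise_integral_bound
    (p : ℝ → ℝ) (hmeas : Measurable p) (hnonneg : ∀ u : ℝ, 0 ≤ p u)
    (hsymm : ∀ u : ℝ, p u = p (-u))
    (σ : ℝ) (hσ : 0 < σ)
    (hmom_int : Integrable (fun u : ℝ => |u| * p u))
    (hmom : (∫ u : ℝ, |u| * p u) ≤ σ)
    (ζ ε : ℝ) (hε : 0 < ε) :
    Integrable (fun u : ℝ => u * p u / Real.sqrt ((ζ + u) ^ 2 + ε)) ∧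
      |∫ u : ℝ, u * p u / Real.sqrt ((ζ + u) ^ 2 + ε)| ≤ 2 * σ * |ζ| / ε := by
  have hε' : (0:ℝ) < Real.sqrt ε := Real.sqrt_pos.mpr hε
  have hεsq : Real.sqrt ε * Real.sqrt ε = ε := Real.mul_self_sqrt hε.le
  have hsa : ∀ c u : ℝ, Real.sqrt ε ≤ Real.sqrt ((c + u) ^ 2 + ε) := fun c u =>
    Real.sqrt_le_sqrt (by nlinarith [sq_nonneg (c + u)])
  have hspos : ∀ c u : ℝ, 0 < Real.sqrt ((c + u) ^ 2 + ε) := fun c u =>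
    lt_of_lt_of_le hε' (hsa c u)
  have habs : ∀ c u : ℝ, |c + u| ≤ Real.sqrt ((c + u) ^ 2 + ε) := by
    intro c u
    rw [← Real.sqrt_sq_eq_abs]
    exact Real.sqrt_le_sqrt (by nlinarith)
  -- integrability for any shift
  have hint : ∀ c : ℝ, Integrable (fun u : ℝ => u * p u / Real.sqrt ((c + u) ^ 2 + ε)) := by
    intro c
    apply Integrable.mono' (hmom_int.div_const (Real.sqrt ε))
    · apply Measurable.aestronglyMeasurable
      exact (measurable_id.mul hmeas).div
        ((((measurable_const.add measurable_id).pow measurable_const).add measurable_const).sqrt)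
    · filter_upwards with u
      rw [Real.norm_eq_abs, abs_div, abs_of_pos (hspos c u), abs_mul,
        abs_of_nonneg (hnonneg u)]
      gcongr
      · exact mul_nonneg (abs_nonneg u) (hnonneg u)
      · nlinarith [sq_nonneg (c + u)]
  refine ⟨hint ζ, ?_⟩
  set f : ℝ → ℝ := fun u => u * p u / Real.sqrt ((ζ + u) ^ 2 + ε) with hfdef
  set g : ℝ → ℝ := fun u => u * p u / Real.sqrt ((ζ - u) ^ 2 + ε) with hgdef
  have hgint : Integrable g := by
    have h : g = fun u : ℝ => u * p u / Real.sqrt ((-ζ + u) ^ 2 + ε) := by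
      funext u
      simp only [hgdef]
      rw [show (ζ - u) ^ 2 = (-ζ + u) ^ 2 by ring]
    rw [h]; exact hint (-ζ)
  have hgf : ∀ u : ℝ, f (-u) = -g u := by
    intro u
    simp only [hfdef, hgdef]
    rw [← hsymm u, show ζ + -u = ζ - u by ring]
    ring
  have hIJ : ∫ u, f u = - ∫ u, g u := by
    rw [← integral_neg_eq_self f]
    simp_rw [hgf]
    exact integral_neg g
  -- pointwise bound on f - g
  have hpt : ∀ u : ℝ, ‖f u - g u‖ ≤ 2 * |ζ| / ε * (|u| * p u) := by
    intro u
    set sa := Real.sqrt ((ζ + u) ^ 2 + ε) with hsadef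
    set sb := Real.sqrt ((ζ - u) ^ 2 + ε) with hsbdef
    have hsa1 : Real.sqrt ε ≤ sa := hsa ζ u
    have hsb1 : Real.sqrt ε ≤ sb := by
      rw [hsbdef, show (ζ - u) ^ 2 = (ζ + -u) ^ 2 by ring]
      exact hsa ζ (-u)
    have hsapos : 0 < sa := lt_of_lt_of_le hε' hsa1
    have hsbpos : 0 < sb := lt_of_lt_of_le hε' hsb1
    have hsasq : sa ^ 2 = (ζ + u) ^ 2 + ε := Real.sq_sqrt (by positivity)
    have hsbsq : sb ^ 2 = (ζ - u) ^ 2 + ε := Real.sq_sqrt (by positivity)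
    have habsa : |ζ + u| ≤ sa := habs ζ u
    have habsb : |ζ - u| ≤ sb := by
      rw [hsbdef, show ζ - u = ζ + -u by ring]
      exact habs ζ (-u)
    have hsum2 : 2 * |u| ≤ sa + sb := by
      have h2u : |2 * u| ≤ |ζ + u| + |ζ - u| := by
        calc |2 * u| = |(ζ + u) - (ζ - u)| := by ring_nf
          _ ≤ |ζ + u| + |ζ - u| := abs_sub _ _
      rw [abs_mul, abs_two] at h2u
      linarith
    have hdiff : |sb - sa| ≤ 2 * |ζ| := by
      have hmul : |sb - sa| * (sa + sb) ≤ 2 * |ζ| * (sa + sb) := by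
        have h1 : |sb - sa| * (sa + sb) = |(sb - sa) * (sb + sa)| := by
          rw [abs_mul, abs_of_pos (by linarith : (0:ℝ) < sb + sa)]; ring
        have h2 : (sb - sa) * (sb + sa) = -(4 * ζ * u) := by nlinarith [hsasq, hsbsq]
        rw [h1, h2, abs_neg]
        have : |4 * ζ * u| = 4 * |ζ| * |u| := by
          rw [abs_mul, abs_mul]; norm_num
        rw [this]
        nlinarith [abs_nonneg ζ, abs_nonneg u]
      exact le_of_mul_le_mul_right hmul (by linarith)
    have hprod : ε ≤ sa * sb := by nlinarith
    have heq : f u - g u = u * p u * (sb - sa) / (sa * sb) := by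
      simp only [hfdef, hgdef, ← hsadef, ← hsbdef]
      field_simp
    rw [Real.norm_eq_abs, heq, abs_div, abs_mul, abs_mul, abs_of_nonneg (hnonneg u),
      abs_of_pos (by positivity : (0:ℝ) < sa * sb)]
    calc |u| * p u * |sb - sa| / (sa * sb) ≤ |u| * p u * (2 * |ζ|) / ε :=
          div_le_div₀ (mul_nonneg (mul_nonneg (abs_nonneg u) (hnonneg u)) (by positivity))
            (mul_le_mul_of_nonneg_left hdiff (mul_nonneg (abs_nonneg u) (hnonneg u)))
            hε hprod
        _ = 2 * |ζ| / ε * (|u| * p u) := by ring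
  have hbound : |∫ u, (f u - g u)| ≤ 2 * |ζ| / ε * σ := by
    have h1 : ‖∫ u, (f u - g u)‖ ≤ ∫ u, 2 * |ζ| / ε * (|u| * p u) := by
      apply norm_integral_le_of_norm_le (hmom_int.const_mul (2 * |ζ| / ε))
      filter_upwards with u
      exact hpt u
    rw [integral_const_mul] at h1
    rw [← Real.norm_eq_abs]
    calc ‖∫ u, (f u - g u)‖ ≤ 2 * |ζ| / ε * ∫ u, |u| * p u := h1
      _ ≤ 2 * |ζ| / ε * σ := by gcongr
  have hsub : ∫ u, (f u - g u) = (∫ u, f u) - ∫ u, g u := integral_sub (hint ζ) hgint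
  have h2I : (2:ℝ) * ∫ u, f u = ∫ u, (f u - g u) := by
    rw [hsub, hIJ]; ring
  have : |∫ u, f u| ≤ |ζ| / ε * σ := by
    have := hbound
    rw [← h2I] at this
    rw [abs_mul, abs_two] at this
    have h3 : 2 * |ζ| / ε * σ = 2 * (|ζ| / ε * σ) := by ring
    linarith
  calc |∫ u, f u| ≤ |ζ| / ε * σ := this
    _ ≤ 2 * σ * |ζ| / ε := by
        rw [show |ζ| / ε * σ = σ * |ζ| / ε by ring]
        gcongr
        nlinarith [abs_nonneg ζ]
end

section
/- Let p: ℝ → ℝ be a nonnegative measurable function with ∫_{-∞}^{∞} p(u) du = 1 and ∫_{-∞}^{∞} |u| p(u) du ≤ σ for some σ > 0. Fix a constant 0 < c_b < 1 and set b = σ/(1 − c_b). Then for every ε > 0, every M ≥ 0, and every ζ ∈ ℝ with |ζ| ≤ M, it holds that ∫_{-∞}^{∞} p(u)/√((ζ + u)² + ε) du ≥ c_b / √(2M² + 2b² + ε). -/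
open MeasureTheory

/-- Lower bound on the first summand `S₁`: for a probability density `p` with first
absolute moment bounded by `σ`, `0 < c_b < 1`, `b = σ/(1−c_b)`, `ε > 0`, `|ζ| ≤ M`:
`∫ p(u)/√((ζ+u)² + ε) du ≥ c_b/√(2M² + 2b² + ε)`. -/
theorem expected_clip_denominator_lower_bound
    (p : ℝ → ℝ) (hmeas : Measurable p) (hnonneg : ∀ u : ℝ, 0 ≤ p u)
    (hint : Integrable p) (hmass : (∫ u : ℝ, p u) = 1)
    (σ : ℝ) (hσ : 0 < σ)
    (hmom_int : Integrable (fun u : ℝ => |u| * p u))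
    (hmom : (∫ u : ℝ, |u| * p u) ≤ σ)
    (cb : ℝ) (hcb0 : 0 < cb) (hcb1 : cb < 1)
    (b : ℝ) (hb : b = σ / (1 - cb))
    (ε : ℝ) (hε : 0 < ε) (M : ℝ) (hM : 0 ≤ M)
    (ζ : ℝ) (hζ : |ζ| ≤ M) :
    (∫ u : ℝ, p u / Real.sqrt ((ζ + u) ^ 2 + ε)) ≥
      cb / Real.sqrt (2 * M ^ 2 + 2 * b ^ 2 + ε) := by
  have hcb' : 0 < 1 - cb := by linarith
  have hbpos : 0 < b := by rw [hb]; positivity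
  set C := Real.sqrt (2 * M ^ 2 + 2 * b ^ 2 + ε) with hC
  have hCpos : 0 < C := Real.sqrt_pos.mpr (by positivity)
  set A : Set ℝ := Set.Icc (-b) b with hA
  have hAmeas : MeasurableSet A := measurableSet_Icc
  have hsqrt_pos : ∀ u : ℝ, 0 < Real.sqrt ((ζ + u) ^ 2 + ε) :=
    fun u => Real.sqrt_pos.mpr (by positivity)
  have hfmeas : Measurable fun u : ℝ => p u / Real.sqrt ((ζ + u) ^ 2 + ε) :=
    hmeas.div ((((measurable_const.add measurable_id).pow_const 2).add_const ε).sqrt)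
  have hfint : Integrable (fun u : ℝ => p u / Real.sqrt ((ζ + u) ^ 2 + ε)) := by
    apply (hint.mul_const (1 / Real.sqrt ε)).mono' hfmeas.aestronglyMeasurable
    filter_upwards with u
    rw [Real.norm_eq_abs, abs_of_nonneg (div_nonneg (hnonneg u) (hsqrt_pos u).le), mul_one_div]
    gcongr
    · exact hnonneg u
    · nlinarith [sq_nonneg (ζ + u)]
  have key1 : ∀ u ∈ A, p u / C ≤ p u / Real.sqrt ((ζ + u) ^ 2 + ε) := by
    intro u hu
    have hz : ζ ^ 2 ≤ M ^ 2 := by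
      obtain ⟨h1, h2⟩ := abs_le.mp hζ; nlinarith
    have hu2 : u ^ 2 ≤ b ^ 2 := by
      obtain ⟨h1, h2⟩ := hu; nlinarith
    have h1 : (ζ + u) ^ 2 + ε ≤ 2 * M ^ 2 + 2 * b ^ 2 + ε := by
      nlinarith [sq_nonneg (ζ - u)]
    rw [hC]
    exact div_le_div_of_nonneg_left (hnonneg u) (hsqrt_pos u) (Real.sqrt_le_sqrt h1)
  have hind_int : Integrable (A.indicator fun u => p u / C) :=
    (hint.div_const C).indicator hAmeas
  have step1 : (∫ u, A.indicator (fun u => p u / C) u)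
      ≤ ∫ u : ℝ, p u / Real.sqrt ((ζ + u) ^ 2 + ε) := by
    apply integral_mono hind_int hfint
    intro u
    by_cases hu : u ∈ A
    · rw [Set.indicator_of_mem hu]; exact key1 u hu
    · rw [Set.indicator_of_notMem hu]
      exact div_nonneg (hnonneg u) (hsqrt_pos u).le
  have hindval : (∫ u, A.indicator (fun u => p u / C) u) = (∫ u in A, p u) / C := by
    rw [integral_indicator hAmeas, integral_div]
  -- Markov bound
  have hPc : (∫ u in Aᶜ, p u) ≤ 1 - cb := by
    have hmono : ∀ u ∈ Aᶜ, p u ≤ |u| * p u / b := by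
      intro u hu
      have hbu : b ≤ |u| := by
        simp only [hA, Set.mem_compl_iff, Set.mem_Icc, not_and_or, not_le] at hu
        rcases hu with h | h
        · rw [abs_of_nonpos (by linarith)]; linarith
        · rw [abs_of_pos (by linarith)]; linarith
      rw [le_div_iff₀ hbpos]
      nlinarith [hnonneg u]
    calc (∫ u in Aᶜ, p u) ≤ ∫ u in Aᶜ, |u| * p u / b := by
          apply setIntegral_mono_on hint.integrableOn
            (hmom_int.div_const b).integrableOn hAmeas.compl hmono
      _ ≤ ∫ u : ℝ, |u| * p u / b := by
          apply setIntegral_le_integral (hmom_int.div_const b)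
          filter_upwards with u
          exact div_nonneg (mul_nonneg (abs_nonneg u) (hnonneg u)) hbpos.le
      _ = (∫ u : ℝ, |u| * p u) / b := integral_div _ _
      _ ≤ σ / b := by gcongr
      _ = 1 - cb := by rw [hb]; field_simp
  have hPA : cb ≤ ∫ u in A, p u := by
    have := integral_add_compl hAmeas hint
    rw [hmass] at this
    linarith
  calc cb / C ≤ (∫ u in A, p u) / C := by gcongr
    _ = ∫ u, A.indicator (fun u => p u / C) u := hindval.symm
    _ ≤ _ := step1
end

section
/- For any constants γ ∈ (0, 1) and ν ∈ (0, 1), there exists a constant c_{γ,ν} > 0 (depending only on γ and ν) such that for all integers t ≥ 1, the sum ∑_{k=0}^{t−1} γ^{t−k} / (k + 1)^ν is at most c_{γ,ν} / (t + 1)^ν. -/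
/-!
Since `t + 1 ≤ (k + 1) (t - k + 1)` and `0 < ν < 1`, each weight satisfies
`(t + 1)^ν / (k + 1)^ν ≤ (t - k + 1)^ν ≤ t - k + 1`. Multiplying the sum by `(t + 1)^ν` therefore
leaves at most `∑_{n ≤ t} (n + 1) γ^n ≤ ∑_n (n + 1) γ^n = 1 / (1 - γ)^2`.
-/

open Finset

lemma add_add_one_le_mul_add_one {a b : ℝ} (ha : 0 ≤ a) (hb : 0 ≤ b) :
    a + b + 1 ≤ (a + 1) * (b + 1) := by
  nlinarith [mul_nonneg ha hb]

lemma add_add_one_rpow_le {a b ν : ℝ} (ha : 0 ≤ a) (hb : 0 ≤ b) (hν0 : 0 ≤ ν) (hν1 : ν ≤ 1) :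
    (a + b + 1) ^ ν ≤ (a + 1) ^ ν * (b + 1) :=
  calc (a + b + 1) ^ ν ≤ ((a + 1) * (b + 1)) ^ ν :=
        Real.rpow_le_rpow (by positivity) (add_add_one_le_mul_add_one ha hb) hν0
    _ = (a + 1) ^ ν * (b + 1) ^ ν := Real.mul_rpow (by positivity) (by positivity)
    _ ≤ (a + 1) ^ ν * (b + 1) := by
        gcongr
        exact Real.rpow_le_self_of_one_le (by linarith) hν1

lemma hasSum_add_one_mul_geometric {r : ℝ} (hr : ‖r‖ < 1) :
    HasSum (fun n : ℕ ↦ ((n : ℝ) + 1) * r ^ n) (1 / (1 - r) ^ 2) := by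
  simpa using hasSum_choose_mul_geometric_of_norm_lt_one 1 hr

lemma sum_range_comp_sub_le_tsum {g : ℕ → ℝ} (hg : ∀ n, 0 ≤ g n) (hs : Summable g) (t : ℕ) :
    ∑ k ∈ range t, g (t - k) ≤ ∑' n, g n :=
  calc ∑ k ∈ range t, g (t - k) ≤ ∑ k ∈ range (t + 1), g (t - k) := by
        rw [sum_range_succ]
        exact le_add_of_nonneg_right (hg _)
    _ = ∑ n ∈ range (t + 1), g n := by
        simpa using sum_range_reflect g (t + 1)
    _ ≤ ∑' n, g n := hs.sum_le_tsum _ fun n _ ↦ hg n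

/-- For any `γ ∈ (0,1)` and `ν ∈ (0,1)` there exists `c > 0` such that for all `t ≥ 1`,
`∑_{k=0}^{t−1} γ^{t−k}/(k+1)^ν ≤ c/(t+1)^ν`. -/
theorem geometric_polynomial_series_bound
    (γ ν : ℝ) (hγ0 : 0 < γ) (hγ1 : γ < 1) (hν0 : 0 < ν) (hν1 : ν < 1) :
    ∃ c : ℝ, 0 < c ∧ ∀ t : ℕ, 1 ≤ t →
      ∑ k ∈ Finset.range t, γ ^ (t - k) / ((k : ℝ) + 1) ^ ν ≤
        c / ((t : ℝ) + 1) ^ ν := by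
  have hγ : ‖γ‖ < 1 := by rwa [Real.norm_of_nonneg hγ0.le]
  have hsum := hasSum_add_one_mul_geometric hγ
  refine ⟨1 / (1 - γ) ^ 2, by have := sub_pos.2 hγ1; positivity, fun t _ ↦ ?_⟩
  have hterm : ∀ k ∈ range t, γ ^ (t - k) / ((k : ℝ) + 1) ^ ν ≤
      (((t - k : ℕ) : ℝ) + 1) * γ ^ (t - k) / ((t : ℝ) + 1) ^ ν := by
    intro k hk
    have hweight : ((t : ℝ) + 1) ^ ν ≤ ((k : ℝ) + 1) ^ ν * (((t - k : ℕ) : ℝ) + 1) := by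
      have := add_add_one_rpow_le k.cast_nonneg (t - k).cast_nonneg hν0.le hν1.le
      rwa [← Nat.cast_add, Nat.add_sub_cancel' (mem_range.1 hk).le] at this
    rw [div_le_div_iff₀ (by positivity) (by positivity)]
    calc γ ^ (t - k) * ((t : ℝ) + 1) ^ ν
        ≤ γ ^ (t - k) * (((k : ℝ) + 1) ^ ν * (((t - k : ℕ) : ℝ) + 1)) := by gcongr
      _ = (((t - k : ℕ) : ℝ) + 1) * γ ^ (t - k) * ((k : ℝ) + 1) ^ ν := by ring
  calc ∑ k ∈ range t, γ ^ (t - k) / ((k : ℝ) + 1) ^ ν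
      ≤ (∑ k ∈ range t, (((t - k : ℕ) : ℝ) + 1) * γ ^ (t - k)) / ((t : ℝ) + 1) ^ ν := by
        rw [sum_div]; exact sum_le_sum hterm
    _ ≤ 1 / (1 - γ) ^ 2 / ((t : ℝ) + 1) ^ ν := by
        gcongr
        rw [← hsum.tsum_eq]
        exact sum_range_comp_sub_le_tsum (fun n ↦ by positivity) hsum.summable t
end

section
/- Let κ > 1 be a real number. Then for every real x > 0, the inequality (x + 1)² − κ(x − 1)² ≥ 2x holds if and only if (κ − √(2κ − 1))/(κ − 1) ≤ x ≤ (κ + √(2κ − 1))/(κ − 1). Moreover, for κ > 1 one has 0 ≤ (κ − √(2κ − 1))/(κ − 1) < 1, and (1 + 1/√(2(κ − 1)))² ≤ (κ + √(2κ − 1))/(κ − 1). -/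
/-- For `κ > 1` and `x > 0`: `(x+1)² − κ(x−1)² ≥ 2x` iff
`(κ − √(2κ−1))/(κ−1) ≤ x ≤ (κ + √(2κ−1))/(κ−1)`. Moreover the lower root lies in
`[0, 1)` and `(1 + 1/√(2(κ−1)))² ≤ (κ + √(2κ−1))/(κ−1)`. -/
theorem condition_number_quadratic (κ : ℝ) (hκ : 1 < κ) :
    (∀ x : ℝ, 0 < x →
      ((x + 1) ^ 2 - κ * (x - 1) ^ 2 ≥ 2 * x ↔
        (κ - Real.sqrt (2 * κ - 1)) / (κ - 1) ≤ x ∧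
          x ≤ (κ + Real.sqrt (2 * κ - 1)) / (κ - 1))) ∧
    0 ≤ (κ - Real.sqrt (2 * κ - 1)) / (κ - 1) ∧
    (κ - Real.sqrt (2 * κ - 1)) / (κ - 1) < 1 ∧
    (1 + 1 / Real.sqrt (2 * (κ - 1))) ^ 2 ≤ (κ + Real.sqrt (2 * κ - 1)) / (κ - 1) := by
  have hκ1 : (0:ℝ) < κ - 1 := by linarith
  set s := Real.sqrt (2 * κ - 1) with hsdef
  have hs2 : s ^ 2 = 2 * κ - 1 := Real.sq_sqrt (by linarith)
  have hs0 : 0 < s := Real.sqrt_pos.mpr (by linarith)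
  have hs1 : 1 < s := by nlinarith
  have hsκ : s ≤ κ := by nlinarith
  set t := Real.sqrt (2 * (κ - 1)) with htdef
  have ht2 : t ^ 2 = 2 * (κ - 1) := Real.sq_sqrt (by linarith)
  have ht0 : 0 < t := Real.sqrt_pos.mpr (by linarith)
  have hts : t ≤ s := by nlinarith
  refine ⟨fun x hx => ?_, ?_, ?_, ?_⟩
  · rw [ge_iff_le, div_le_iff₀ hκ1, le_div_iff₀ hκ1]
    constructor
    · intro h
      constructor
      · nlinarith [sq_nonneg (x * (κ - 1) - κ - s), sq_nonneg (x * (κ - 1) - κ + s)]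
      · nlinarith [sq_nonneg (x * (κ - 1) - κ - s), sq_nonneg (x * (κ - 1) - κ + s)]
    · rintro ⟨h1, h2⟩
      nlinarith [mul_nonneg (sub_nonneg.mpr h1) (sub_nonneg.mpr h2)]
  · apply div_nonneg _ hκ1.le; linarith
  · rw [div_lt_one hκ1]; linarith
  · rw [le_div_iff₀ hκ1]
    have h1 : (1 + 1 / t) ^ 2 * (κ - 1) = (κ - 1) + 2 * ((κ - 1) / t) + (κ - 1) / t ^ 2 := by
      field_simp; ring
    have h2 : (κ - 1) / t ^ 2 = 1 / 2 := by
      rw [ht2]; field_simp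
    have h3 : (κ - 1) / t = t / 2 := by
      rw [div_eq_div_iff ht0.ne' two_ne_zero]; nlinarith
    rw [h1, h2, h3]
    linarith
end
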